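/- arXiv:1711.06989 — 3 statements merged into one kernel-verified Lean document; each statement's English description precedes it below -/
import Mathlib

section
/- Let A be a symmetric n×n real matrix, Q an n×k real matrix with QᵀQ = I_k, and ε ≥ 0 a real number. If ‖A − Q·Qᵀ·A‖ ≤ ε, then ‖A − Q·Qᵀ·A·Q·Qᵀ‖ ≤ 2ε, where ‖·‖ is the spectral norm. -/
open Matrix
open scoped Matrix.Norms.L2Operator

theorem two_sided_proj_error (n k : ℕ)
    (A : Matrix (Fin n) (Fin n) ℝ) (hA : Aᵀ = A)
    (Q : Matrix (Fin n) (Fin k) ℝ)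
    (hQ : Qᵀ * Q = (1 : Matrix (Fin k) (Fin k) ℝ))
    (ε : ℝ) (hε : 0 ≤ ε)
    (h : ‖A - Q * Qᵀ * A‖ ≤ ε) :
    ‖A - Q * Qᵀ * A * Q * Qᵀ‖ ≤ 2 * ε := by
  -- norm of identity is ≤ 1
  have hQH : Qᴴ = Qᵀ := by
    ext i j; simp [conjTranspose_apply]
  have h1 : ‖(1 : Matrix (Fin k) (Fin k) ℝ)‖ ≤ 1 := by
    have := Matrix.l2_opNorm_conjTranspose_mul_self (1 : Matrix (Fin k) (Fin k) ℝ)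
    simp only [conjTranspose_one, mul_one] at this
    nlinarith [norm_nonneg (1 : Matrix (Fin k) (Fin k) ℝ)]
  have hQn : ‖Q‖ ≤ 1 := by
    have := Matrix.l2_opNorm_conjTranspose_mul_self Q
    rw [hQH, hQ] at this
    nlinarith [norm_nonneg Q]
  have hQtn : ‖Qᵀ‖ ≤ 1 := by
    rw [← hQH, Matrix.l2_opNorm_conjTranspose]; exact hQn
  -- transpose bound
  have hct : ∀ (M : Matrix (Fin n) (Fin n) ℝ), Mᴴ = Mᵀ := fun M => by
    ext i j; simp [conjTranspose_apply]
  have ht : ‖A - A * (Q * Qᵀ)‖ ≤ ε := by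
    have hc : (A - A * (Q * Qᵀ))ᴴ = A - Q * Qᵀ * A := by
      rw [hct, transpose_sub, transpose_mul, transpose_mul, transpose_transpose, hA]
    calc ‖A - A * (Q * Qᵀ)‖ = ‖(A - A * (Q * Qᵀ))ᴴ‖ :=
          (Matrix.l2_opNorm_conjTranspose _).symm
      _ = ‖A - Q * Qᵀ * A‖ := by rw [hc]
      _ ≤ ε := h
  have key : A - Q * Qᵀ * A * Q * Qᵀ
      = (A - Q * Qᵀ * A) + Q * Qᵀ * (A - A * (Q * Qᵀ)) := by
    have e : Q * Qᵀ * A * Q * Qᵀ = Q * Qᵀ * (A * (Q * Qᵀ)) := by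
      rw [Matrix.mul_assoc, Matrix.mul_assoc]
    rw [e, Matrix.mul_sub]
    abel
  have h2 : ‖Q * Qᵀ * (A - A * (Q * Qᵀ))‖ ≤ ε := by
    calc ‖Q * Qᵀ * (A - A * (Q * Qᵀ))‖
        ≤ ‖Q * Qᵀ‖ * ‖A - A * (Q * Qᵀ)‖ := Matrix.l2_opNorm_mul _ _
      _ ≤ 1 * ε := by
          apply mul_le_mul _ ht (norm_nonneg _) zero_le_one
          calc ‖Q * Qᵀ‖ ≤ ‖Q‖ * ‖Qᵀ‖ := Matrix.l2_opNorm_mul _ _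
            _ ≤ 1 * 1 := mul_le_mul hQn hQtn (norm_nonneg _) zero_le_one
            _ = 1 := one_mul 1
      _ = ε := one_mul ε
  calc ‖A - Q * Qᵀ * A * Q * Qᵀ‖
      = ‖(A - Q * Qᵀ * A) + Q * Qᵀ * (A - A * (Q * Qᵀ))‖ := by rw [key]
    _ ≤ ‖A - Q * Qᵀ * A‖ + ‖Q * Qᵀ * (A - A * (Q * Qᵀ))‖ := norm_add_le _ _
    _ ≤ ε + ε := add_le_add h h2
    _ = 2 * ε := by ring
end

section
/- Let A be a symmetric n×n real matrix, Q an n×k real matrix with QᵀQ = I_k, and ε ≥ 0 with ‖A − Q·Qᵀ·A‖ ≤ ε. Let Z = Qᵀ·A·Q, and suppose V is a k×k orthogonal matrix (VᵀV = I_k) and S a k×k matrix such that Z = V·S·Vᵀ. Set U = Q·V. Then UᵀU = I_k and ‖A − U·S·Uᵀ‖ ≤ 2ε. -/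
open Matrix
open scoped Matrix.Norms.L2Operator

theorem approx_eigendecomposition_accuracy (n k : ℕ)
    (A : Matrix (Fin n) (Fin n) ℝ) (hA : Aᵀ = A)
    (Q : Matrix (Fin n) (Fin k) ℝ)
    (hQ : Qᵀ * Q = (1 : Matrix (Fin k) (Fin k) ℝ))
    (ε : ℝ) (hε : 0 ≤ ε)
    (h : ‖A - Q * Qᵀ * A‖ ≤ ε)
    (Z : Matrix (Fin k) (Fin k) ℝ) (hZ : Z = Qᵀ * A * Q)
    (V S : Matrix (Fin k) (Fin k) ℝ)
    (hV : Vᵀ * V = (1 : Matrix (Fin k) (Fin k) ℝ))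
    (hZVS : Z = V * S * Vᵀ)
    (U : Matrix (Fin n) (Fin k) ℝ) (hU : U = Q * V) :
    Uᵀ * U = (1 : Matrix (Fin k) (Fin k) ℝ) ∧ ‖A - U * S * Uᵀ‖ ≤ 2 * ε := by
  have hUU : Uᵀ * U = (1 : Matrix (Fin k) (Fin k) ℝ) := by
    rw [hU, Matrix.transpose_mul, Matrix.mul_assoc, ← Matrix.mul_assoc Qᵀ, hQ,
      Matrix.one_mul, hV]
  refine ⟨hUU, ?_⟩
  have hVVt : V * S * Vᵀ = Qᵀ * A * Q := by rw [← hZVS, hZ]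
  have hUSU : U * S * Uᵀ = Q * Qᵀ * A * (Q * Qᵀ) := by
    have h1 : U * S * Uᵀ = Q * (V * S * Vᵀ) * Qᵀ := by
      rw [hU, Matrix.transpose_mul]
      simp only [Matrix.mul_assoc]
    rw [h1, hVVt]
    simp only [Matrix.mul_assoc]
  have hQQ : ‖Q‖ * ‖Q‖ = ‖(1 : Matrix (Fin k) (Fin k) ℝ)‖ := by
    rw [← Matrix.l2_opNorm_conjTranspose_mul_self Q]
    rw [show Qᴴ = Qᵀ from rfl, hQ]
  have hone : ‖(1 : Matrix (Fin k) (Fin k) ℝ)‖ ≤ 1 := by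
    have h1 : ‖(1 : Matrix (Fin k) (Fin k) ℝ)‖ * ‖(1 : Matrix (Fin k) (Fin k) ℝ)‖
        = ‖(1 : Matrix (Fin k) (Fin k) ℝ)‖ := by
      have h2 := Matrix.l2_opNorm_conjTranspose_mul_self (1 : Matrix (Fin k) (Fin k) ℝ)
      simpa using h2.symm
    nlinarith [norm_nonneg (1 : Matrix (Fin k) (Fin k) ℝ)]
  have ht : ‖Qᵀ‖ = ‖Q‖ := by
    rw [show Qᵀ = Qᴴ from rfl]; exact Matrix.l2_opNorm_conjTranspose Q
  have hQnorm : ‖Q‖ * ‖Qᵀ‖ ≤ 1 := by rw [ht, hQQ]; exact hone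
  have hAAt : A - A * (Q * Qᵀ) = (A - Q * Qᵀ * A)ᵀ := by
    rw [Matrix.transpose_sub, Matrix.transpose_mul, Matrix.transpose_mul,
      Matrix.transpose_transpose, hA]
  have hnt : ‖A - A * (Q * Qᵀ)‖ = ‖A - Q * Qᵀ * A‖ := by
    rw [hAAt, show (A - Q * Qᵀ * A)ᵀ = (A - Q * Qᵀ * A)ᴴ from rfl]
    exact Matrix.l2_opNorm_conjTranspose _
  have hsplit : A - U * S * Uᵀ = (A - Q * Qᵀ * A) + Q * Qᵀ * (A - A * (Q * Qᵀ)) := by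
    rw [hUSU]
    noncomm_ring
  have hbound : ‖Q * Qᵀ * (A - A * (Q * Qᵀ))‖ ≤ ε := by
    calc ‖Q * Qᵀ * (A - A * (Q * Qᵀ))‖ ≤ ‖Q * Qᵀ‖ * ‖A - A * (Q * Qᵀ)‖ :=
          Matrix.l2_opNorm_mul _ _
    _ ≤ (‖Q‖ * ‖Qᵀ‖) * ‖A - A * (Q * Qᵀ)‖ :=
          mul_le_mul_of_nonneg_right (Matrix.l2_opNorm_mul Q Qᵀ) (norm_nonneg _)
    _ ≤ 1 * ‖A - A * (Q * Qᵀ)‖ :=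
          mul_le_mul_of_nonneg_right hQnorm (norm_nonneg _)
    _ = ‖A - Q * Qᵀ * A‖ := by rw [one_mul, hnt]
    _ ≤ ε := h
  calc ‖A - U * S * Uᵀ‖ = ‖(A - Q * Qᵀ * A) + Q * Qᵀ * (A - A * (Q * Qᵀ))‖ := by rw [hsplit]
  _ ≤ ‖A - Q * Qᵀ * A‖ + ‖Q * Qᵀ * (A - A * (Q * Qᵀ))‖ := norm_add_le _ _
  _ ≤ ε + ε := add_le_add h hbound
  _ = 2 * ε := by ring
end

section
/- Fix a positive integer T and a nondecreasing sequence of dimensions n_1 ≤ n_2 ≤ ... ≤ n_T. Let K be a symmetric n_T×n_T real matrix and, for each t, let K_t be the leading principal n_t×n_t submatrix of K. Suppose that for each t ∈ {1,...,T} we are given an n_t×k matrix U_t, a k×k matrix S_t, and a real number δ_t ≥ 0 such that ‖K̄_t − U_t·S_t·U_tᵀ‖ ≤ δ_t, where K̄_1 = K_1 and, for t ≥ 2, K̄_t is the n_t×n_t matrix obtained from K_t by replacing its leading principal n_{t−1}×n_{t−1} block with U_{t−1}·S_{t−1}·U_{t−1}ᵀ (leaving the off-diagonal blocks and the trailing diagonal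 block of K_t unchanged). Then ‖K_T − U_T·S_T·U_Tᵀ‖ ≤ Σ_{t=1}^T δ_t. (This is the deterministic core of Theorem 1 of the paper: with δ_t = 2(1 + 9√((k+p)n_t))·σ_{k+1}(K_t), the stated error bound of Theorem 1 follows.) -/
open Matrix
open scoped Matrix.Norms.L2Operator

/-- The leading principal `m × m` submatrix of an `n × n` matrix (`m ≤ n`). -/
def leadSub {n : ℕ} (m : ℕ) (h : m ≤ n) (K : Matrix (Fin n) (Fin n) ℝ) :
    Matrix (Fin m) (Fin m) ℝ :=
  K.submatrix (Fin.castLE h) (Fin.castLE h)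

/-- Replace the leading principal `m × m` block of the `nt × nt` matrix `Kt` by `M`,
leaving the off-diagonal blocks and the trailing diagonal block unchanged. -/
def replaceLead {nt : ℕ} (m : ℕ) (h : m ≤ nt) (Kt : Matrix (Fin nt) (Fin nt) ℝ)
    (M : Matrix (Fin m) (Fin m) ℝ) : Matrix (Fin nt) (Fin nt) ℝ :=
  Matrix.of fun i j =>
    if hi : (i : ℕ) < m then
      if hj : (j : ℕ) < m then M ⟨i, hi⟩ ⟨j, hj⟩ else Kt i j
    else Kt i j

/-- The matrix of the canonical embedding `Fin m → Fin N`. -/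
def embedMat (m N : ℕ) (h : m ≤ N) : Matrix (Fin N) (Fin m) ℝ :=
  Matrix.of fun i j => if i = Fin.castLE h j then (1 : ℝ) else 0

lemma embedMat_tmul (m N : ℕ) (h : m ≤ N) :
    (embedMat m N h)ᴴ * embedMat m N h = 1 := by
  ext a b
  simp only [embedMat, Matrix.mul_apply, Matrix.conjTranspose_apply, Matrix.of_apply,
    star_trivial, ite_mul, one_mul, zero_mul]
  rw [Finset.sum_ite_eq' Finset.univ (Fin.castLE h a)]
  simp [Matrix.one_apply, Fin.ext_iff, eq_comm]

lemma embedMat_norm_mul (m N : ℕ) (h : m ≤ N) (A : Matrix (Fin m) (Fin m) ℝ) :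
    ‖embedMat m N h * A * (embedMat m N h)ᴴ‖ ≤ ‖A‖ := by
  set P := embedMat m N h with hP
  have hPn : ‖P‖ ≤ 1 := by
    have h2 := Matrix.l2_opNorm_conjTranspose_mul_self P
    rw [embedMat_tmul] at h2
    have h1 : ‖(1 : Matrix (Fin m) (Fin m) ℝ)‖ ≤ 1 := by
      have := Matrix.l2_opNorm_conjTranspose_mul_self (1 : Matrix (Fin m) (Fin m) ℝ)
      simp only [Matrix.conjTranspose_one, mul_one] at this
      nlinarith [norm_nonneg (1 : Matrix (Fin m) (Fin m) ℝ)]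
    nlinarith [norm_nonneg P]
  have hPt : ‖Pᴴ‖ ≤ 1 := by rw [Matrix.l2_opNorm_conjTranspose]; exact hPn
  calc ‖P * A * Pᴴ‖ ≤ ‖P * A‖ * ‖Pᴴ‖ := Matrix.l2_opNorm_mul _ _
    _ ≤ (‖P‖ * ‖A‖) * ‖Pᴴ‖ :=
        mul_le_mul_of_nonneg_right (Matrix.l2_opNorm_mul P A) (norm_nonneg _)
    _ ≤ (1 * ‖A‖) * 1 := by
        have hA := norm_nonneg A
        nlinarith [norm_nonneg P, norm_nonneg Pᴴ, mul_nonneg (norm_nonneg P) hA]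
    _ = ‖A‖ := by ring

lemma embed_mul_apply {m N l : ℕ} (h : m ≤ N) (X : Matrix (Fin m) (Fin l) ℝ)
    (i : Fin N) (b : Fin l) :
    (embedMat m N h * X) i b = if hi : (i : ℕ) < m then X ⟨i, hi⟩ b else 0 := by
  rw [Matrix.mul_apply]
  simp only [embedMat, Matrix.of_apply, ite_mul, one_mul, zero_mul]
  split
  · next hi =>
      have key : ∀ a : Fin m, (i = Fin.castLE h a) ↔ a = ⟨i, hi⟩ := by
        intro a; constructor
        · intro hh; exact Fin.ext (by simpa [Fin.ext_iff, eq_comm] using hh)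
        · rintro rfl; exact Fin.ext rfl
      simp_rw [key]
      rw [Finset.sum_ite_eq' Finset.univ (⟨i, hi⟩ : Fin m)]
      simp
  · next hi =>
      apply Finset.sum_eq_zero
      intro a _
      rw [if_neg]
      intro hh
      exact hi (hh ▸ a.isLt)

lemma mul_embedT_apply {m N l : ℕ} (h : m ≤ N) (Y : Matrix (Fin l) (Fin m) ℝ)
    (i : Fin l) (j : Fin N) :
    (Y * (embedMat m N h)ᴴ) i j = if hj : (j : ℕ) < m then Y i ⟨j, hj⟩ else 0 := by
  rw [Matrix.mul_apply]
  simp only [embedMat, Matrix.conjTranspose_apply, Matrix.of_apply, star_trivial,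
    mul_ite, mul_one, mul_zero]
  split
  · next hj =>
      have key : ∀ b : Fin m, (j = Fin.castLE h b) ↔ b = ⟨j, hj⟩ := by
        intro b; constructor
        · intro hh; exact Fin.ext (by simpa [Fin.ext_iff, eq_comm] using hh)
        · rintro rfl; exact Fin.ext rfl
      simp_rw [key]
      rw [Finset.sum_ite_eq' Finset.univ (⟨j, hj⟩ : Fin m)]
      simp
  · next hj =>
      apply Finset.sum_eq_zero
      intro b _
      rw [if_neg]
      intro hh
      exact hj (hh ▸ b.isLt)

lemma sub_replaceLead {N m : ℕ} (h : m ≤ N) (Kt : Matrix (Fin N) (Fin N) ℝ)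
    (M : Matrix (Fin m) (Fin m) ℝ) :
    Kt - replaceLead m h Kt M
      = embedMat m N h * (leadSub m h Kt - M) * (embedMat m N h)ᴴ := by
  ext i j
  rw [mul_embedT_apply]
  simp only [embed_mul_apply]
  by_cases hi : (i : ℕ) < m
  · by_cases hj : (j : ℕ) < m
    · simp [hi, hj, replaceLead, leadSub, Matrix.sub_apply, Fin.castLE]
    · simp [hi, hj, replaceLead]
  · simp [hi, replaceLead]

lemma leadSub_leadSub {N m l : ℕ} (h1 : m ≤ l) (h2 : l ≤ N)
    (K : Matrix (Fin N) (Fin N) ℝ) :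
    leadSub m h1 (leadSub l h2 K) = leadSub m (h1.trans h2) K := by
  ext i j; rfl

theorem sequential_factorization_error (T k : ℕ) (hT : 1 ≤ T)
    (n : ℕ → ℕ) (hmono : Monotone n)
    (K : Matrix (Fin (n T)) (Fin (n T)) ℝ) (hK : K.IsSymm)
    (U : ∀ t, Matrix (Fin (n t)) (Fin k) ℝ)
    (S : ℕ → Matrix (Fin k) (Fin k) ℝ)
    (δ : ℕ → ℝ) (hδ : ∀ t ∈ Finset.Icc 1 T, 0 ≤ δ t)
    (h1 : ‖leadSub (n 1) (hmono hT) K - U 1 * S 1 * (U 1)ᵀ‖ ≤ δ 1)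
    (hstep : ∀ t, 2 ≤ t → ∀ htT : t ≤ T,
      ‖replaceLead (n (t - 1)) (hmono (Nat.sub_le t 1))
          (leadSub (n t) (hmono htT) K)
          (U (t - 1) * S (t - 1) * (U (t - 1))ᵀ)
        - U t * S t * (U t)ᵀ‖ ≤ δ t) :
    ‖K - U T * S T * (U T)ᵀ‖ ≤ ∑ t ∈ Finset.Icc 1 T, δ t := by
  have main : ∀ t, 1 ≤ t → ∀ htT : t ≤ T,
      ‖leadSub (n t) (hmono htT) K - U t * S t * (U t)ᵀ‖ ≤ ∑ s ∈ Finset.Icc 1 t, δ s := by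
    intro t ht
    induction t, ht using Nat.le_induction with
    | base =>
        intro htT
        simpa using h1
    | succ t ht ih =>
        intro htT
        have htT' : t ≤ T := le_trans (Nat.le_succ t) htT
        set M : Matrix (Fin (n t)) (Fin (n t)) ℝ := U t * S t * (U t)ᵀ with hM
        set Kt := leadSub (n (t + 1)) (hmono htT) K with hKt
        have hmn : n t ≤ n (t + 1) := hmono (Nat.le_succ t)
        have hstep' := hstep (t + 1) (by omega) htT
        simp only [Nat.add_sub_cancel] at hstep'
        have hdecomp :
            Kt - U (t+1) * S (t+1) * (U (t+1))ᵀ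
              = (replaceLead (n t) (hmono (Nat.sub_le (t+1) 1)) Kt M
                  - U (t+1) * S (t+1) * (U (t+1))ᵀ)
                + (Kt - replaceLead (n t) (hmono (Nat.sub_le (t+1) 1)) Kt M) := by
          abel
        rw [hdecomp]
        have hnorm2 :
            ‖Kt - replaceLead (n t) (hmono (Nat.sub_le (t+1) 1)) Kt M‖
              ≤ ∑ s ∈ Finset.Icc 1 t, δ s := by
          rw [sub_replaceLead]
          refine le_trans (embedMat_norm_mul _ _ _ _) ?_
          rw [hKt, leadSub_leadSub]
          exact ih htT'
        calc ‖_ + _‖ ≤ ‖replaceLead (n t) (hmono (Nat.sub_le (t+1) 1)) Kt M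
                  - U (t+1) * S (t+1) * (U (t+1))ᵀ‖
                + ‖Kt - replaceLead (n t) (hmono (Nat.sub_le (t+1) 1)) Kt M‖ :=
              norm_add_le _ _
          _ ≤ δ (t+1) + ∑ s ∈ Finset.Icc 1 t, δ s := add_le_add hstep' hnorm2
          _ = ∑ s ∈ Finset.Icc 1 (t+1), δ s := by
              rw [Finset.sum_Icc_succ_top (by omega : 1 ≤ t + 1)]
              ring
  have hfinal := main T hT le_rfl
  have hKeq : leadSub (n T) (hmono (le_refl T)) K = K := by
    ext i j
    simp [leadSub, Fin.castLE]
  rwa [hKeq] at hfinal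
end
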